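/- Let K ⊆ J be proper ideals of a finitely generated torsion-free monoid P and E a ℤ[P]/(K)-module. If Tor₁^{ℤ[P]/(K)}(ℤ[P]/(P⁺), E) = 0, then Tor₁^{ℤ[P]/(J)}(ℤ[P]/(P⁺), E/(J)E) = 0. -/

import Mathlib

open CategoryTheory

/-- The monomial ideal `(J)` of `ℤ[P]` generated by the `t^j`, `j ∈ J`. -/
noncomputable def monomialIdeal (P : Type*) [AddCancelCommMonoid P] (J : Set P) :
    Ideal (AddMonoidAlgebra ℤ P) :=
  Ideal.span ((fun p : P => (AddMonoidAlgebra.single p 1 : AddMonoidAlgebra ℤ P)) '' J)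

/-! Fix an ideal `a` of a commutative ring `A` and a surjection `p : F → M` with `F` projective.
Tensoring a projective resolution of `M` with `A/a` reduces it modulo `a`, which shows that
`Tor₁^A(A/a, M) = 0` iff `ker p ∩ aF ⊆ a·ker p`; by lifting along projectives this condition does
not depend on `p`. For an ideal `b ⊆ a` the condition passes from `p` to its reduction
`F/bF → M/bM`, a surjection from a projective `A/b`-module, so `Tor₁^{A/b}((A/b)/a, M/bM) = 0`.
A proper monoid ideal `J` misses the units of `P`, so `(J) ⊆ (P⁺)`, and we apply this to
`A = ℤ[P]/(K)`, `b = (J)`, `a = (P⁺)`. -/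

open scoped TensorProduct Pointwise
open Submodule

universe u

theorem Submodule.comap_le_comap_iff_range_inf_le {A M N : Type*} [CommRing A]
    [AddCommGroup M] [Module A M] [AddCommGroup N] [Module A N] (f : M →ₗ[A] N)
    {X Y : Submodule A N} :
    X.comap f ≤ Y.comap f ↔ LinearMap.range f ⊓ X ≤ Y := by
  refine ⟨?_, fun h x hx => h ⟨LinearMap.mem_range_self f x, hx⟩⟩
  rintro h y ⟨⟨x, rfl⟩, hx⟩
  exact h hx

theorem LinearMap.ker_inf_map_smul_le_iff {R S : Type*} [CommRing R] [CommRing S] [Algebra R S]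
    (a : Ideal R) {X Y : Type*} [AddCommGroup X] [Module R X] [Module S X] [IsScalarTower R S X]
    [AddCommGroup Y] [Module R Y] [Module S Y] [IsScalarTower R S Y] (q : X →ₗ[S] Y) :
    LinearMap.ker q ⊓ a.map (algebraMap R S) • ⊤ ≤ a.map (algebraMap R S) • LinearMap.ker q ↔
      LinearMap.ker (q.restrictScalars R) ⊓ a • ⊤ ≤ a • LinearMap.ker (q.restrictScalars R) := by
  rw [← restrictScalars_le R, restrictScalars_inf, Ideal.smul_restrictScalars,
    Ideal.smul_restrictScalars, restrictScalars_top, LinearMap.ker_restrictScalars]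

section

variable {A : Type*} [CommRing A] (a : Ideal A)

theorem Submodule.map_smul_le_smul {M N : Type*} [AddCommGroup M] [Module A M]
    [AddCommGroup N] [Module A N] (f : M →ₗ[A] N) {X : Submodule A M} {Y : Submodule A N}
    (h : X.map f ≤ Y) : (a • X).map f ≤ a • Y := by
  rw [map_smul'']
  exact smul_mono_right a h

theorem exact_mapQ_smul_top_iff {F₂ F₁ F₀ : Type*} [AddCommGroup F₂] [Module A F₂]
    [AddCommGroup F₁] [Module A F₁] [AddCommGroup F₀] [Module A F₀]
    {d₂ : F₂ →ₗ[A] F₁} {d₁ : F₁ →ₗ[A] F₀} (hex : Function.Exact d₂ d₁) :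
    Function.Exact (mapQ _ _ d₂ (smul_top_le_comap_smul_top a d₂))
      (mapQ _ _ d₁ (smul_top_le_comap_smul_top a d₁)) ↔
      LinearMap.range d₁ ⊓ a • ⊤ ≤ a • LinearMap.range d₁ := by
  have hker : LinearMap.ker d₁ ≤ (a • ⊤ : Submodule A F₀).comap d₁ := comap_mono bot_le
  rw [LinearMap.exact_iff, ker_mapQ, range_mapQ, ← LinearMap.exact_iff.mp hex, le_antisymm_iff,
    and_iff_left (map_mono hker), map_le_iff_le_comap, comap_map_mkQ, ← comap_map_eq,
    map_smul'', Submodule.map_top, comap_le_comap_iff_range_inf_le]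

theorem TensorProduct.quotTensorEquivQuotSMul_comp_lTensor {Y Z : Type*} [AddCommGroup Y]
    [Module A Y] [AddCommGroup Z] [Module A Z] (f : Y →ₗ[A] Z) :
    (quotTensorEquivQuotSMul Z a).toLinearMap ∘ₗ f.lTensor (A ⧸ a) =
      mapQ _ _ f (smul_top_le_comap_smul_top a f) ∘ₗ (quotTensorEquivQuotSMul Y a).toLinearMap := by
  ext y
  simp

theorem ker_inf_smul_le_of_lifts {F G M : Type*} [AddCommGroup F] [Module A F]
    [AddCommGroup G] [Module A G] [AddCommGroup M] [Module A M]
    {p : F →ₗ[A] M} {q : G →ₗ[A] M} {h : F →ₗ[A] G} {k : G →ₗ[A] F}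
    (hh : q ∘ₗ h = p) (hk : p ∘ₗ k = q)
    (hp : LinearMap.ker p ⊓ a • ⊤ ≤ a • LinearMap.ker p) :
    LinearMap.ker q ⊓ a • ⊤ ≤ a • LinearMap.ker q := by
  rintro y ⟨hyq, hya⟩
  have hky : k y ∈ LinearMap.ker p ⊓ a • ⊤ :=
    ⟨by simpa [← hk] using hyq, smul_top_le_comap_smul_top a k hya⟩
  have hhk : h (k y) ∈ a • LinearMap.ker q := by
    refine map_smul_le_smul a h ?_ (mem_map_of_mem (hp hky))
    rintro _ ⟨x, hx, rfl⟩
    simpa [← hh] using hx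
  -- `y = (id - h ∘ k) y + h (k y)` and `q ∘ (id - h ∘ k) = 0`
  have hrest : (LinearMap.id - h ∘ₗ k : G →ₗ[A] G) y ∈ a • LinearMap.ker q := by
    refine map_smul_le_smul a _ ?_ (mem_map_of_mem hya)
    rintro _ ⟨x, -, rfl⟩
    simp [LinearMap.mem_ker, ← LinearMap.comp_apply q h, hh, ← LinearMap.comp_apply p k, hk]
  simpa using add_mem hrest hhk

theorem ker_inf_smul_le_iff_of_projective {F G M : Type*} [AddCommGroup F] [Module A F]
    [Module.Projective A F] [AddCommGroup G] [Module A G] [Module.Projective A G]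
    [AddCommGroup M] [Module A M] {p : F →ₗ[A] M} {q : G →ₗ[A] M}
    (hp : Function.Surjective p) (hq : Function.Surjective q) :
    LinearMap.ker p ⊓ a • ⊤ ≤ a • LinearMap.ker p ↔
      LinearMap.ker q ⊓ a • ⊤ ≤ a • LinearMap.ker q := by
  obtain ⟨h, hh⟩ := Module.projective_lifting_property q p hq
  obtain ⟨k, hk⟩ := Module.projective_lifting_property p q hp
  exact ⟨ker_inf_smul_le_of_lifts a hh hk, ker_inf_smul_le_of_lifts a hk hh⟩

theorem ker_mapQ_inf_smul_le {b : Ideal A} (hba : b ≤ a) {F M : Type*} [AddCommGroup F]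
    [Module A F] [AddCommGroup M] [Module A M] {p : F →ₗ[A] M} (hp : Function.Surjective p)
    (h : LinearMap.ker p ⊓ a • ⊤ ≤ a • LinearMap.ker p) :
    LinearMap.ker (mapQ _ _ p (smul_top_le_comap_smul_top b p)) ⊓ a • ⊤ ≤
      a • LinearMap.ker (mapQ _ _ p (smul_top_le_comap_smul_top b p)) := by
  rintro x ⟨hx, hxa⟩
  rw [← range_mkQ (b • ⊤ : Submodule A F), ← Submodule.map_top, ← map_smul''] at hxa
  obtain ⟨y, hya, rfl⟩ := hxa
  have hpy : p y ∈ (b • ⊤ : Submodule A F).map p := by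
    rw [map_smul'', Submodule.map_top, LinearMap.range_eq_top.mpr hp]
    simpa using hx
  obtain ⟨z, hzb, hz⟩ := hpy
  have hyz : y - z ∈ LinearMap.ker p ⊓ a • ⊤ :=
    ⟨by simp [hz], sub_mem hya (smul_mono_left hba hzb)⟩
  have hclass : (b • ⊤ : Submodule A F).mkQ (y - z) = (b • ⊤ : Submodule A F).mkQ y := by
    simpa [Submodule.Quotient.eq] using hzb
  rw [← hclass]
  refine map_smul_le_smul a _ ?_ (mem_map_of_mem (h hyz))
  rintro _ ⟨w, hw, rfl⟩
  simp [LinearMap.mem_ker.mp hw]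

instance Module.Projective.quotient_smul_top (b : Ideal A) (F : Type*) [AddCommGroup F]
    [Module A F] [Module.Projective A F] :
    Module.Projective (A ⧸ b) (F ⧸ b • (⊤ : Submodule A F)) :=
  .of_equiv ((TensorProduct.quotTensorEquivQuotSMul F b).extendScalarsOfSurjective
    Ideal.Quotient.mk_surjective)

end

section

open CategoryTheory Limits

variable {A : Type u} [CommRing A]

theorem tor_one_quotient_subsingleton_iff (a : Ideal A) {F M : Type u} [AddCommGroup F]
    [Module A F] [Module.Projective A F] [AddCommGroup M] [Module A M] {p : F →ₗ[A] M}
    (hp : Function.Surjective p) :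
    Subsingleton (((Tor (ModuleCat.{u} A) 1).obj (ModuleCat.of A (A ⧸ a))).obj
        (ModuleCat.of A M)) ↔
      LinearMap.ker p ⊓ a • ⊤ ≤ a • LinearMap.ker p := by
  obtain ⟨P⟩ := (inferInstance : HasProjectiveResolution (ModuleCat.of A M)).out
  let G := (MonoidalCategory.tensoringLeft (ModuleCat.{u} A)).obj (ModuleCat.of A (A ⧸ a))
  let Q := (G.mapHomologicalComplex _).obj P.complex
  let d₂ := (P.complex.d 2 1).hom
  let d₁ := (P.complex.d 1 0).hom
  let p₀ := (P.π.f 0).hom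
  have hp₀ : Function.Surjective p₀ := (ModuleCat.epi_iff_surjective (P.π.f 0)).mp inferInstance
  have hex : Function.Exact d₂ d₁ :=
    (ShortComplex.ShortExact.moduleCat_exact_iff_function_exact _).mp (P.exact_succ 0)
  have hker : LinearMap.ker p₀ = LinearMap.range d₁ :=
    ((ShortComplex.mk _ _ P.complex_d_comp_π_f_zero).moduleCat_exact_iff_range_eq_ker.mp
      P.exact₀).symm
  have : Module.Projective A (P.complex.X 0) := (IsProjective.iff_projective _).mpr (P.projective 0)
  calc Subsingleton (((Tor (ModuleCat.{u} A) 1).obj (ModuleCat.of A (A ⧸ a))).obj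
        (ModuleCat.of A M))
      ↔ Subsingleton (Q.homology 1) :=
        Equiv.subsingleton_congr (P.isoLeftDerivedObj G 1).toLinearEquiv.toEquiv
    _ ↔ Function.Exact (d₂.lTensor (A ⧸ a)) (d₁.lTensor (A ⧸ a)) := by
        rw [← ModuleCat.isZero_iff_subsingleton, ← HomologicalComplex.exactAt_iff_isZero_homology,
          HomologicalComplex.exactAt_iff' Q 2 1 0 (by simp) (by simp),
          ShortComplex.ShortExact.moduleCat_exact_iff_function_exact]
        rfl
    _ ↔ Function.Exact (mapQ _ _ d₂ (smul_top_le_comap_smul_top a d₂))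
          (mapQ _ _ d₁ (smul_top_le_comap_smul_top a d₁)) :=
        (Function.Exact.iff_of_ladder_linearEquiv
          (TensorProduct.quotTensorEquivQuotSMul_comp_lTensor a d₂).symm
          (TensorProduct.quotTensorEquivQuotSMul_comp_lTensor a d₁).symm).symm
    _ ↔ LinearMap.ker p₀ ⊓ a • ⊤ ≤ a • LinearMap.ker p₀ := by
        rw [exact_mapQ_smul_top_iff a hex, hker]
    _ ↔ LinearMap.ker p ⊓ a • ⊤ ≤ a • LinearMap.ker p :=
        ker_inf_smul_le_iff_of_projective a hp₀ hp

theorem tor_one_quotient_subsingleton_of_le {a b : Ideal A} (hba : b ≤ a) (M : Type u)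
    [AddCommGroup M] [Module A M]
    (h : Subsingleton (((Tor (ModuleCat.{u} A) 1).obj (ModuleCat.of A (A ⧸ a))).obj
      (ModuleCat.of A M))) :
    Subsingleton (((Tor (ModuleCat.{u} (A ⧸ b)) 1).obj
        (ModuleCat.of (A ⧸ b) ((A ⧸ b) ⧸ a.map (Ideal.Quotient.mk b)))).obj
      (ModuleCat.of (A ⧸ b) (M ⧸ b • (⊤ : Submodule A M)))) := by
  let p : (M →₀ A) →ₗ[A] M := Finsupp.linearCombination A id
  have hp : Function.Surjective p := Finsupp.linearCombination_id_surjective A M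
  let pb := mapQ _ _ p (smul_top_le_comap_smul_top b p)
  have hpb : Function.Surjective pb := by
    rw [← LinearMap.range_eq_top, range_mapQ, LinearMap.range_eq_top.mpr hp, Submodule.map_top,
      range_mkQ]
  rw [tor_one_quotient_subsingleton_iff (A := A ⧸ b) _
    (p := pb.extendScalarsOfSurjective Ideal.Quotient.mk_surjective) hpb,
    ← Ideal.Quotient.algebraMap_eq, LinearMap.ker_inf_map_smul_le_iff]
  exact ker_mapQ_inf_smul_le a hba hp ((tor_one_quotient_subsingleton_iff a hp).mp h)

end

theorem monomialIdeal_mono (P : Type*) [AddCancelCommMonoid P] {J J' : Set P} (h : J ⊆ J') :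
    monomialIdeal P J ≤ monomialIdeal P J' :=
  Ideal.span_mono (Set.image_mono h)

theorem subset_setOf_not_isAddUnit {P : Type*} [AddCommMonoid P] {J : Set P}
    (hJ : ∀ p : P, ∀ j ∈ J, p + j ∈ J) (hJproper : J ≠ Set.univ) :
    J ⊆ {p : P | ¬ IsAddUnit p} := by
  rintro j hj ⟨u, rfl⟩
  refine hJproper (Set.eq_univ_of_forall fun p => ?_)
  simpa [add_assoc] using hJ (p + ↑(-u)) _ hj

theorem weakly_tflat_ascends_general {P : Type u} [AddCancelCommMonoid P]
    (K J : Set P)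
    (hJ : ∀ p : P, ∀ j ∈ J, p + j ∈ J) (hJproper : J ≠ Set.univ)
    (E : Type u) [AddCommGroup E]
    [Module (AddMonoidAlgebra ℤ P ⧸ monomialIdeal P K) E]
    (hwtf : Subsingleton (((Tor (ModuleCat (AddMonoidAlgebra ℤ P ⧸ monomialIdeal P K)) 1).obj
      (ModuleCat.of _ ((AddMonoidAlgebra ℤ P ⧸ monomialIdeal P K) ⧸
        Ideal.map (Ideal.Quotient.mk (monomialIdeal P K))
          (monomialIdeal P {p : P | ¬ IsAddUnit p})))).obj
      (ModuleCat.of _ E))) :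
    Subsingleton (((Tor (@ModuleCat ((AddMonoidAlgebra ℤ P ⧸ monomialIdeal P K) ⧸
        Ideal.map (Ideal.Quotient.mk (monomialIdeal P K)) (monomialIdeal P J)) CommRing.toRing) 1).obj
      (ModuleCat.of _ (((AddMonoidAlgebra ℤ P ⧸ monomialIdeal P K) ⧸
          Ideal.map (Ideal.Quotient.mk (monomialIdeal P K)) (monomialIdeal P J)) ⧸
        Ideal.map (Ideal.Quotient.mk (Ideal.map (Ideal.Quotient.mk (monomialIdeal P K))
            (monomialIdeal P J)))
          (Ideal.map (Ideal.Quotient.mk (monomialIdeal P K))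
            (monomialIdeal P {p : P | ¬ IsAddUnit p}))))).obj
      (ModuleCat.of _ (E ⧸ ((Ideal.map (Ideal.Quotient.mk (monomialIdeal P K))
          (monomialIdeal P J)) •
        (⊤ : Submodule (AddMonoidAlgebra ℤ P ⧸ monomialIdeal P K) E))))) := by
  exact tor_one_quotient_subsingleton_of_le
    (Ideal.map_mono (monomialIdeal_mono P (subset_setOf_not_isAddUnit hJ hJproper))) E hwtf

set_option synthInstance.maxHeartbeats 1000000 in
set_option maxHeartbeats 1000000 in
/-- Let `K ⊆ J` be proper ideals of a finitely generated torsion-free commutative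
cancellative monoid `P`, `P⁺ = P \ P^*` its maximal ideal, and `E` a `ℤ[P]/(K)`-module.
If `Tor₁^{ℤ[P]/(K)}(ℤ[P]/(P⁺), E) = 0` (`E` is weakly t-flat relative to `K`), then
`Tor₁^{ℤ[P]/(J)}(ℤ[P]/(P⁺), E/(J)E) = 0` (`E/(J)E` is weakly t-flat relative to `J`),
where `ℤ[P]/(J)` is realized as the quotient of `ℤ[P]/(K)` by the image of `(J)`. -/
theorem weakly_tflat_ascends {P : Type u} [AddCancelCommMonoid P]
    (hfg : AddMonoid.FG P)
    (htf : ∀ (n : ℕ) (a b : P), 0 < n → n • a = n • b → a = b)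
    (K J : Set P) (hKJ : K ⊆ J)
    (hK : ∀ p : P, ∀ k ∈ K, p + k ∈ K) (hKproper : K ≠ Set.univ)
    (hJ : ∀ p : P, ∀ j ∈ J, p + j ∈ J) (hJproper : J ≠ Set.univ)
    (E : Type u) [AddCommGroup E]
    [Module (AddMonoidAlgebra ℤ P ⧸ monomialIdeal P K) E]
    (hwtf : Subsingleton (((Tor (ModuleCat (AddMonoidAlgebra ℤ P ⧸ monomialIdeal P K)) 1).obj
      (ModuleCat.of _ ((AddMonoidAlgebra ℤ P ⧸ monomialIdeal P K) ⧸
        Ideal.map (Ideal.Quotient.mk (monomialIdeal P K))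
          (monomialIdeal P {p : P | ¬ IsAddUnit p})))).obj
      (ModuleCat.of _ E))) :
    Subsingleton (((Tor (@ModuleCat ((AddMonoidAlgebra ℤ P ⧸ monomialIdeal P K) ⧸
        Ideal.map (Ideal.Quotient.mk (monomialIdeal P K)) (monomialIdeal P J)) CommRing.toRing) 1).obj
      (ModuleCat.of _ (((AddMonoidAlgebra ℤ P ⧸ monomialIdeal P K) ⧸
          Ideal.map (Ideal.Quotient.mk (monomialIdeal P K)) (monomialIdeal P J)) ⧸
        Ideal.map (Ideal.Quotient.mk (Ideal.map (Ideal.Quotient.mk (monomialIdeal P K))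
            (monomialIdeal P J)))
          (Ideal.map (Ideal.Quotient.mk (monomialIdeal P K))
            (monomialIdeal P {p : P | ¬ IsAddUnit p}))))).obj
      (ModuleCat.of _ (E ⧸ ((Ideal.map (Ideal.Quotient.mk (monomialIdeal P K))
          (monomialIdeal P J)) •
        (⊤ : Submodule (AddMonoidAlgebra ℤ P ⧸ monomialIdeal P K) E))))) :=
  weakly_tflat_ascends_general K J hJ hJproper E hwtf
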